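/- There exists a unique triple (b₁, b₂, b₃) ∈ ℝ³ satisfying the six linear equations: −(1/432)b₁ + (5/432)b₂ + (35/432)b₃ = 0; (1/27)b₁ + (4/27)b₂ + (10/27)b₃ = −1/16; (1/3)b₁ + (1/2)b₂ + (2/3)b₃ = 0; (26/27)b₁ + (23/27)b₂ + (17/27)b₃ = 9/16; (289/216)b₁ + (211/216)b₂ + (109/216)b₃ = 1; 2b₁ + 2b₂ + 2b₃ = 1. Moreover, for this solution the polynomial identity Σ_{k=−6}^{7} a_k z^{k+6} = (1/27)(1 + z + z²)⁴ (b₃ + b₂ z + b₁ z² + b₁ z³ + b₂ z⁴ + b₃ z⁵) holds for all z ∈ ℂ, where {a_k}_{k=−6}^{7} = {13/1296, −11/648, −1/16, −107/1296, 179/1296, 9/16, 137/144, 137/144, 9/16, 179/1296, −107/1296, −1/16, −11/648, 13/1296}. -/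
import Mathlib

/-- The six linear equations determining the symmetric quotient `(b₁, b₂, b₃)` of the
ternary dual interpolatory scheme of Section 4.2. -/
def ternaryEqs (b₁ b₂ b₃ : ℝ) : Prop :=
  -(1 / 432) * b₁ + (5 / 432) * b₂ + (35 / 432) * b₃ = 0 ∧
  (1 / 27) * b₁ + (4 / 27) * b₂ + (10 / 27) * b₃ = -(1 / 16) ∧
  (1 / 3) * b₁ + (1 / 2) * b₂ + (2 / 3) * b₃ = 0 ∧
  (26 / 27) * b₁ + (23 / 27) * b₂ + (17 / 27) * b₃ = 9 / 16 ∧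
  (289 / 216) * b₁ + (211 / 216) * b₂ + (109 / 216) * b₃ = 1 ∧
  2 * b₁ + 2 * b₂ + 2 * b₃ = 1

lemma ternaryEqs_sol {b₁ b₂ b₃ : ℝ} (h : ternaryEqs b₁ b₂ b₃) :
    b₁ = 85 / 48 ∧ b₂ = -(37 / 24) ∧ b₃ = 13 / 48 := by
  obtain ⟨h1, h2, h3, h4, h5, h6⟩ := h
  refine ⟨by linarith, by linarith, by linarith⟩

/-- the linear system has a unique solution `(b₁, b₂, b₃)`, and for this
solution the polynomial identity
`Σ_{k=-6}^{7} a_k z^{k+6} = (1/27)(1+z+z²)⁴(b₃ + b₂ z + b₁ z² + b₁ z³ + b₂ z⁴ + b₃ z⁵)`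
holds, where the `a_k` are the entries of the ternary dual interpolatory mask. -/
theorem ternary_dual_interpolatory_construction :
    (∃! p : ℝ × ℝ × ℝ, ternaryEqs p.1 p.2.1 p.2.2) ∧
    (∀ b₁ b₂ b₃ : ℝ, ternaryEqs b₁ b₂ b₃ → ∀ z : ℂ,
      (13 / 1296 : ℂ) + (-(11 / 648) : ℂ) * z + (-(1 / 16) : ℂ) * z ^ 2 +
        (-(107 / 1296) : ℂ) * z ^ 3 + (179 / 1296 : ℂ) * z ^ 4 + (9 / 16 : ℂ) * z ^ 5 +
        (137 / 144 : ℂ) * z ^ 6 + (137 / 144 : ℂ) * z ^ 7 + (9 / 16 : ℂ) * z ^ 8 +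
        (179 / 1296 : ℂ) * z ^ 9 + (-(107 / 1296) : ℂ) * z ^ 10 + (-(1 / 16) : ℂ) * z ^ 11 +
        (-(11 / 648) : ℂ) * z ^ 12 + (13 / 1296 : ℂ) * z ^ 13 =
      (1 / 27 : ℂ) * (1 + z + z ^ 2) ^ 4 *
        ((b₃ : ℂ) + (b₂ : ℂ) * z + (b₁ : ℂ) * z ^ 2 + (b₁ : ℂ) * z ^ 3 + (b₂ : ℂ) * z ^ 4 +
          (b₃ : ℂ) * z ^ 5)) := by
  constructor
  · refine ⟨(85 / 48, -(37 / 24), 13 / 48), ?_, ?_⟩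
    · unfold ternaryEqs; norm_num
    · rintro ⟨b₁, b₂, b₃⟩ h
      obtain ⟨e1, e2, e3⟩ := ternaryEqs_sol h
      simp_all
  · intro b₁ b₂ b₃ h z
    obtain ⟨e1, e2, e3⟩ := ternaryEqs_sol h
    subst e1 e2 e3
    push_cast
    ring
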